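/- Trace identities for chiral resolvents (Lemma 7.5). Let N ≥ 1, let X ∈ ℂ^{N×N} be any matrix, z ∈ ℂ, w ∈ ℂ∖ℝ, and set G := (H^z − w)^{−1} (this inverse exists since H^z is Hermitian and w ∉ ℝ). Then for every integer n ≥ 1: (i) ⟨(G·E₋)^{2n−1}⟩ = 0; (ii) ⟨(G·E₋)^{2n}⟩ = 2·Σ_{s=0}^{n−1} (−1)^{s+1}·binom(2n−2−s, n−1)·⟨G^{s+1}⟩/(2w)^{2n−s−1}. -/

import Mathlib

open MeasureTheory ProbabilityTheory Filter Matrix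
open scoped ENNReal NNReal

noncomputable section

namespace RMT

/-- Normalized trace `⟨A⟩ := (card m)⁻¹ · Tr A` of a square complex matrix. -/
def ntr {m : Type*} [Fintype m] (A : Matrix m m ℂ) : ℂ :=
  (Fintype.card m : ℂ)⁻¹ * A.trace

/-- The `ℓ² → ℓ²` operator norm of a square complex matrix. -/
def opn {m : Type*} [Fintype m] [DecidableEq m] (A : Matrix m m ℂ) : ℝ :=
  ‖Matrix.toEuclideanCLM (𝕜 := ℂ) A‖

/-- The Hermitization `H^z = [[0, X−z],[(X−z)^*,0]]` of `X − z`. -/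
def herm {N : ℕ} (X : Matrix (Fin N) (Fin N) ℂ) (z : ℂ) :
    Matrix (Fin N ⊕ Fin N) (Fin N ⊕ Fin N) ℂ :=
  Matrix.fromBlocks 0 (X - z • 1) (X - z • 1)ᴴ 0

/-- The resolvent `G^z(w) = (H^z − w)⁻¹` of the Hermitization. -/
def resolv {N : ℕ} (X : Matrix (Fin N) (Fin N) ℂ) (z w : ℂ) :
    Matrix (Fin N ⊕ Fin N) (Fin N ⊕ Fin N) ℂ :=
  (herm X z - w • 1)⁻¹

/-- Number of eigenvalues (roots of the characteristic polynomial, with multiplicity)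
lying in a set `S ⊆ ℂ`. -/
def eigCountIn {N : ℕ} (A : Matrix (Fin N) (Fin N) ℂ) (S : Set ℂ) : ℕ :=
  letI : DecidablePred fun ζ : ℂ => ζ ∈ S := fun _ => Classical.propDecidable _
  Multiset.card (Multiset.filter (fun ζ : ℂ => ζ ∈ S) A.charpoly.roots)

/-- Linear eigenvalue statistics `Σ_i g(σ_i)` (complex-valued test function). -/
def linStatC {N : ℕ} (A : Matrix (Fin N) (Fin N) ℂ) (g : ℂ → ℂ) : ℂ :=
  (Multiset.map g A.charpoly.roots).sum

/-- Linear eigenvalue statistics `Σ_i g(σ_i)` (real-valued test function). -/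
def linStatR {N : ℕ} (A : Matrix (Fin N) (Fin N) ℂ) (g : ℂ → ℝ) : ℝ :=
  (Multiset.map g A.charpoly.roots).sum

/-- `m^z(w)`: the unique solution of `−1/m = w + m − |z|²/(w+m)` with `Im m · Im w > 0`. -/
def mSol (z w : ℂ) : ℂ :=
  Classical.epsilon fun m : ℂ =>
    -m⁻¹ = w + m - ((‖z‖ ^ 2 : ℝ) : ℂ) / (w + m) ∧ 0 < m.im * w.im

/-- `u^z(w) := m^z(w)/(w + m^z(w))`. -/
def uSol (z w : ℂ) : ℂ := mSol z w / (w + mSol z w)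

/-- Self-consistent density of states `ρ^z(E) = lim_{η↓0} π⁻¹ |Im m^z(E+iη)|`. -/
def rhoDen (z : ℂ) (E : ℝ) : ℝ :=
  limUnder (nhdsWithin (0 : ℝ) (Set.Ioi 0))
    fun η : ℝ => |(mSol z ((E : ℂ) + (η : ℂ) * Complex.I)).im| / Real.pi

/-- The `κ`-bulk `𝐁_κ^z := {E : ρ^z(E) ≥ κ}`. -/
def bulk (κ : ℝ) (z : ℂ) : Set ℝ := {E : ℝ | κ ≤ rhoDen z E}

/-- `E₊ = I_{2N}`. -/
def Ep (N : ℕ) : Matrix (Fin N ⊕ Fin N) (Fin N ⊕ Fin N) ℂ := 1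

/-- `E₋ = diag(I_N, −I_N)`. -/
def Em (N : ℕ) : Matrix (Fin N ⊕ Fin N) (Fin N ⊕ Fin N) ℂ :=
  Matrix.fromBlocks 1 0 0 (-1)

/-- `F = [[0, I_N],[0,0]]`. -/
def Fobs (N : ℕ) : Matrix (Fin N ⊕ Fin N) (Fin N ⊕ Fin N) ℂ :=
  Matrix.fromBlocks 0 1 0 0

/-- The span of the observables `E₊, E₋, F, F^*`. -/
def obsSpan (N : ℕ) : Submodule ℂ (Matrix (Fin N ⊕ Fin N) (Fin N ⊕ Fin N) ℂ) :=
  Submodule.span ℂ {Ep N, Em N, Fobs N, (Fobs N)ᴴ}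

/-- The deterministic approximation `M^z(w)` with blocks
`[[m·I, −z u·I],[−conj z u·I, m·I]]`. -/
def MMat (N : ℕ) (z w : ℂ) : Matrix (Fin N ⊕ Fin N) (Fin N ⊕ Fin N) ℂ :=
  Matrix.fromBlocks (mSol z w • 1) ((-(z * uSol z w)) • 1)
    ((-((starRingEnd ℂ) z * uSol z w)) • 1) (mSol z w • 1)

/-- Self-energy operator `𝒮[R] := ⟨R E₊⟩E₊ − ⟨R E₋⟩E₋`. -/
def SOp {N : ℕ} (R : Matrix (Fin N ⊕ Fin N) (Fin N ⊕ Fin N) ℂ) :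
    Matrix (Fin N ⊕ Fin N) (Fin N ⊕ Fin N) ℂ :=
  ntr (R * Ep N) • Ep N - ntr (R * Em N) • Em N

/-- Two-body stability operator `ℬ₁₂[R] := R − M₁ 𝒮[R] M₂`. -/
def calB {N : ℕ} (M₁ M₂ R : Matrix (Fin N ⊕ Fin N) (Fin N ⊕ Fin N) ℂ) :
    Matrix (Fin N ⊕ Fin N) (Fin N ⊕ Fin N) ℂ :=
  R - M₁ * SOp R * M₂

/-- Deterministic two-resolvent approximation `M₁₂^B := ℬ₁₂⁻¹[M₁ B M₂]`. -/
def M12 (N : ℕ) (z₁ w₁ z₂ w₂ : ℂ) (B : Matrix (Fin N ⊕ Fin N) (Fin N ⊕ Fin N) ℂ) :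
    Matrix (Fin N ⊕ Fin N) (Fin N ⊕ Fin N) ℂ :=
  Function.invFun (calB (MMat N z₁ w₁) (MMat N z₂ w₂)) (MMat N z₁ w₁ * B * MMat N z₂ w₂)

/-- The stability control parameter `β̂₁₂(w₁,w₂)`. -/
def betaHat (N : ℕ) (z₁ z₂ w₁ w₂ : ℂ) : ℝ :=
  sInf {v : ℝ | ∃ w₁' ∈ ({w₁, (starRingEnd ℂ) w₁} : Set ℂ),
    ∃ w₂' ∈ ({w₂, (starRingEnd ℂ) w₂} : Set ℂ),
    ∃ R ∈ obsSpan N, opn R = 1 ∧ v = opn (calB (MMat N z₁ w₁') (MMat N z₂ w₂') R)}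

/-- Covariance `Cov(f,g) := 𝔼[(f−𝔼f)·conj(g−𝔼g)]` of two complex random variables. -/
def ccov {Ωs : Type*} [MeasureSpace Ωs] (f g : Ωs → ℂ) : ℂ :=
  ∫ ω, (f ω - ∫ ω', f ω') * (starRingEnd ℂ) (g ω - ∫ ω', g ω')

instance matMS {m n α : Type*} [MeasurableSpace α] : MeasurableSpace (Matrix m n α) :=
  inferInstanceAs (MeasurableSpace (m → n → α))

/-- A complex `N×N` i.i.d. matrix with normalized single-entry distribution `μ` (the law of `χ`)
satisfying Assumption 2.1: entries independent, each distributed as `N^{-1/2}·χ`,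
`𝔼χ = 0`, `𝔼|χ|² = 1`, `𝔼χ² = 0`, `𝔼|χ|^p ≤ C_p`, and `χ` has a density
`ρ_χ ∈ L^{1+𝔞}(ℂ)` with `‖ρ_χ‖_{1+𝔞} ≤ N^𝔟`. -/
structure CplxIID (Cp : ℕ → ℝ) (𝔞 𝔟 : ℝ) (N : ℕ) {Ωs : Type*} [MeasureSpace Ωs]
    (X : Ωs → Matrix (Fin N) (Fin N) ℂ) (μ : Measure ℂ) : Prop where
  probΩ : IsProbabilityMeasure (volume : Measure Ωs)
  probμ : IsProbabilityMeasure μ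
  mean_zero : (∫ ζ, ζ ∂μ) = 0
  absSq_one : (∫⁻ ζ, (‖ζ‖₊ : ℝ≥0∞) ^ 2 ∂μ) = 1
  sq_zero : (∫ ζ, ζ ^ 2 ∂μ) = 0
  moments : ∀ p : ℕ, (∫⁻ ζ, (‖ζ‖₊ : ℝ≥0∞) ^ p ∂μ) ≤ ENNReal.ofReal (Cp p)
  density : ∃ ρχ : ℂ → ℝ≥0∞, Measurable ρχ ∧ μ = volume.withDensity ρχ ∧
      eLpNorm (fun ζ => (ρχ ζ).toReal) (ENNReal.ofReal (1 + 𝔞)) volume ≤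
        ENNReal.ofReal ((N : ℝ) ^ 𝔟)
  indep : iIndepFun (m := fun _ : Fin N × Fin N => inferInstance)
      (fun p ω => X ω p.1 p.2) (volume : Measure Ωs)
  entry_law : ∀ p : Fin N × Fin N,
      Measure.map (fun ω => X ω p.1 p.2) (volume : Measure Ωs) =
        Measure.map (fun ζ : ℂ => (Real.sqrt N)⁻¹ • ζ) μ

/-- A real `N×N` i.i.d. matrix with normalized single-entry distribution `μ` (the law of `χ`). -/
structure RealIID (Cp : ℕ → ℝ) (𝔞 𝔟 : ℝ) (N : ℕ) {Ωs : Type*} [MeasureSpace Ωs]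
    (X : Ωs → Matrix (Fin N) (Fin N) ℝ) (μ : Measure ℝ) : Prop where
  probΩ : IsProbabilityMeasure (volume : Measure Ωs)
  probμ : IsProbabilityMeasure μ
  mean_zero : (∫ x, x ∂μ) = 0
  sq_one : (∫⁻ x, (‖x‖₊ : ℝ≥0∞) ^ 2 ∂μ) = 1
  moments : ∀ p : ℕ, (∫⁻ x, (‖x‖₊ : ℝ≥0∞) ^ p ∂μ) ≤ ENNReal.ofReal (Cp p)
  density : ∃ ρχ : ℝ → ℝ≥0∞, Measurable ρχ ∧ μ = volume.withDensity ρχ ∧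
      eLpNorm (fun x => (ρχ x).toReal) (ENNReal.ofReal (1 + 𝔞)) volume ≤
        ENNReal.ofReal ((N : ℝ) ^ 𝔟)
  indep : iIndepFun (m := fun _ : Fin N × Fin N => inferInstance)
      (fun p ω => X ω p.1 p.2) (volume : Measure Ωs)
  entry_law : ∀ p : Fin N × Fin N,
      Measure.map (fun ω => X ω p.1 p.2) (volume : Measure Ωs) =
        Measure.map (fun x : ℝ => (Real.sqrt N)⁻¹ • x) μ

/-- The standard complex Gaussian law: the law of `(g₁ + i g₂)/√2` with `g₁, g₂`
independent standard real Gaussians. -/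
def stdCplxGaussian : Measure ℂ :=
  Measure.map (fun p : ℝ × ℝ => (p.1 : ℂ) + (p.2 : ℂ) * Complex.I)
    ((gaussianReal 0 (1 / 2)).prod (gaussianReal 0 (1 / 2)))

/-- A complex Ginibre (GinUE) matrix: i.i.d. entries with `√N·x̃_{ab}` standard complex
Gaussian. -/
structure GinUE (N : ℕ) {Ωs : Type*} [MeasureSpace Ωs]
    (X : Ωs → Matrix (Fin N) (Fin N) ℂ) : Prop where
  indep : iIndepFun (m := fun _ : Fin N × Fin N => inferInstance)
      (fun p ω => X ω p.1 p.2) (volume : Measure Ωs)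
  entry_law : ∀ p : Fin N × Fin N,
      Measure.map (fun ω => X ω p.1 p.2) (volume : Measure Ωs) =
        Measure.map (fun ζ : ℂ => (Real.sqrt N)⁻¹ • ζ) stdCplxGaussian

/-- Assumption 2.2 on the domain `Ω_N = N^{-α}·Ω̃_N`. -/
structure DomainAssumption (δ α cd Cd K : ℝ) (N : ℕ) (ΩN Ωt : Set ℂ) : Prop where
  isOpen : IsOpen ΩN
  simplyConnected : SimplyConnectedSpace ↥ΩN
  subset_disk : ΩN ⊆ Metric.ball (0 : ℂ) (1 - δ)
  rescaled : ΩN = (fun ζ : ℂ => ((N : ℝ) ^ (-α) : ℝ) • ζ) '' Ωt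
  diam_lower : cd ≤ Metric.diam Ωt
  diam_upper : Metric.diam Ωt ≤ Cd
  boundary : ∃ (L : ℝ) (γ : ℝ → ℂ), 0 < L ∧ ContDiff ℝ 2 γ ∧ Function.Periodic γ L ∧
      Set.range γ = frontier Ωt ∧ Set.InjOn γ (Set.Ico 0 L) ∧
      (∀ t : ℝ, ‖deriv γ t‖ = 1) ∧ (∀ t : ℝ, ‖deriv (deriv γ) t‖ ≤ K)

/-- Assumptions 2.2 and 2.5 on the domain, real case: additionally the boundary meets the real
axis transversally (tangent angle at least `φ₀`) and near the real axis every connected component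
of the boundary meets the real axis. -/
structure DomainAssumptionReal (δ α cd Cd K φ₀ d₀ : ℝ) (N : ℕ) (ΩN Ωt : Set ℂ) : Prop where
  isOpen : IsOpen ΩN
  simplyConnected : SimplyConnectedSpace ↥ΩN
  subset_disk : ΩN ⊆ Metric.ball (0 : ℂ) (1 - δ)
  rescaled : ΩN = (fun ζ : ℂ => ((N : ℝ) ^ (-α) : ℝ) • ζ) '' Ωt
  diam_lower : cd ≤ Metric.diam Ωt
  diam_upper : Metric.diam Ωt ≤ Cd
  boundary : ∃ (L : ℝ) (γ : ℝ → ℂ), 0 < L ∧ ContDiff ℝ 2 γ ∧ Function.Periodic γ L ∧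
      Set.range γ = frontier Ωt ∧ Set.InjOn γ (Set.Ico 0 L) ∧
      (∀ t : ℝ, ‖deriv γ t‖ = 1) ∧ (∀ t : ℝ, ‖deriv (deriv γ) t‖ ≤ K) ∧
      (∀ t : ℝ, (γ t).im = 0 → Real.sin φ₀ ≤ |(deriv γ t).im|)
  strip : ∀ ζ ∈ frontier Ωt ∩ {ζ : ℂ | |ζ.im| ≤ d₀},
      ∃ ζ' ∈ connectedComponentIn (frontier Ωt ∩ {ζ : ℂ | |ζ.im| ≤ d₀}) ζ, ζ'.im = 0


/-- `U_l := −(1/√2)·∂_w (m^z(w))²`. -/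
def Ufac (z w : ℂ) : ℂ :=
  -((Real.sqrt 2 : ℂ))⁻¹ * deriv (fun w' => (mSol z w') ^ 2) w

/-- `h(w₁,w₂) := 1 + (u₁u₂|z₁||z₂|)² − m₁²m₂² − 2u₁u₂·Re(z₁·conj z₂)`. -/
def hfun (z₁ z₂ w₁ w₂ : ℂ) : ℂ :=
  1 + (uSol z₁ w₁ * uSol z₂ w₂ * ((‖z₁‖ : ℝ) : ℂ) * ((‖z₂‖ : ℝ) : ℂ)) ^ 2 -
    (mSol z₁ w₁) ^ 2 * (mSol z₂ w₂) ^ 2 -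
    2 * uSol z₁ w₁ * uSol z₂ w₂ * (((z₁ * (starRingEnd ℂ) z₂).re : ℝ) : ℂ)

/-- `V₁₂ := −(1/2)·∂_{w₁}[(∂_{w₂}h)/h]`. -/
def V12 (z₁ z₂ w₁ w₂ : ℂ) : ℂ :=
  -(1 / 2 : ℂ) *
    deriv (fun w₁' => (deriv (fun w₂' => hfun z₁ z₂ w₁' w₂') w₂) / hfun z₁ z₂ w₁' w₂) w₁

/-- `LT := |E₁| − |E₂| − sgn(E₁)·(Im u₁/Im m₁)·Re[conj(z₁)(z₁−z₂)]`. -/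
def LTpar (z₁ z₂ w₁ w₂ : ℂ) : ℝ :=
  |w₁.re| - |w₂.re| -
    Real.sign w₁.re * ((uSol z₁ w₁).im / (mSol z₁ w₁).im) *
      ((starRingEnd ℂ) z₁ * (z₁ - z₂)).re

/-- `γ := |z₁−z₂|² + |LT| + (|E₁|−|E₂|)² + η₁ + η₂`. -/
def gammaPar (z₁ z₂ w₁ w₂ : ℂ) : ℝ :=
  ‖z₁ - z₂‖ ^ 2 + |LTpar z₁ z₂ w₁ w₂| + (|w₁.re| - |w₂.re|) ^ 2 + |w₁.im| + |w₂.im|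

/-- `κ₄ := 𝔼|χ|⁴ − 2`. -/
def kappa4 (μ : Measure ℂ) : ℝ := (∫ ζ, ‖ζ‖ ^ 4 ∂μ) - 2

/-- Smallest singular value of `A`: the square root of the least eigenvalue of `Aᴴ·A`. -/
def smin {N : ℕ} (A : Matrix (Fin N) (Fin N) ℂ) : ℝ :=
  Real.sqrt (⨅ i : Fin N, (Matrix.isHermitian_conjTranspose_mul_self A).eigenvalues i)

/-- The `i`-th smallest singular value of `A` (`i = 1, …, N`). -/
def sval {N : ℕ} (A : Matrix (Fin N) (Fin N) ℂ) (i : ℕ) : ℝ :=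
  ((Multiset.map (fun k => Real.sqrt ((Matrix.isHermitian_conjTranspose_mul_self A).eigenvalues k))
      (Finset.univ : Finset (Fin N)).val).sort (· ≤ ·)).getD (i - 1) 0

/-- `𝓔₀(t) := N⁻¹(1/√(Nt) + t)`. -/
def E0fun (N : ℕ) (t : ℝ) : ℝ := ((N : ℝ))⁻¹ * (1 / Real.sqrt ((N : ℝ) * t) + t)

/-- `𝓔₁(t,R) := √(t/N)·(R^{−1/8} + √(R/(N|z₁−z₂|²))) + √(Nt³)/R`. -/
def E1fun (N : ℕ) (z₁ z₂ : ℂ) (t R : ℝ) : ℝ :=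
  Real.sqrt (t / (N : ℝ)) * (R ^ (-(1 : ℝ) / 8) + Real.sqrt (R / ((N : ℝ) * ‖z₁ - z₂‖ ^ 2))) +
    Real.sqrt ((N : ℝ) * t ^ 3) / R

/-- Resolvent chain `G^{z₁}(w₁) B₁ G^{z₂}(w₂) ⋯ B_{k−1} G^{z_k}(w_k)`. -/
def Gchain {N : ℕ} (X : Matrix (Fin N) (Fin N) ℂ) :
    List (ℂ × ℂ) → List (Matrix (Fin N ⊕ Fin N) (Fin N ⊕ Fin N) ℂ) →
      Matrix (Fin N ⊕ Fin N) (Fin N ⊕ Fin N) ℂ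
  | [d], [] => resolv X d.1 d.2
  | d :: ds, B :: bs => resolv X d.1 d.2 * B * Gchain X ds bs
  | _, _ => 1

/-- Fuelled recursion for the deterministic approximation of a resolvent chain. -/
def MchainAux (N : ℕ) :
    ℕ → List (ℂ × ℂ) → List (Matrix (Fin N ⊕ Fin N) (Fin N ⊕ Fin N) ℂ) →
      Matrix (Fin N ⊕ Fin N) (Fin N ⊕ Fin N) ℂ
  | _, [d], [] => MMat N d.1 d.2
  | fuel + 1, d :: d' :: ds, B :: bs =>
      Function.invFun
        (calB (MMat N d.1 d.2)
          (MMat N ((d' :: ds).getLast (List.cons_ne_nil _ _)).1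
            ((d' :: ds).getLast (List.cons_ne_nil _ _)).2))
        (MMat N d.1 d.2 * B * MchainAux N fuel (d' :: ds) bs +
          ∑ j ∈ Finset.Icc 2 ((d :: d' :: ds).length - 1),
            MMat N d.1 d.2 *
                SOp (MchainAux N fuel ((d :: d' :: ds).take j) ((B :: bs).take (j - 1))) *
              MchainAux N fuel ((d :: d' :: ds).drop (j - 1)) ((B :: bs).drop (j - 1)))
  | _, _, _ => 0

/-- Deterministic approximation `M_{[k]}^{B₁,…,B_{k−1}}` of the chain with data `l` and
observables `m`, defined by the recursion (4.18) of the paper. -/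
def Mchain (N : ℕ) (l : List (ℂ × ℂ))
    (m : List (Matrix (Fin N ⊕ Fin N) (Fin N ⊕ Fin N) ℂ)) :
    Matrix (Fin N ⊕ Fin N) (Fin N ⊕ Fin N) ℂ :=
  MchainAux N l.length l m

/-- `η_* := min(η₁, …, η_k, 1)` where `η_l = |Im w_l|`. -/
def etaStar {k : ℕ} (ws : Fin k → ℂ) : ℝ :=
  sInf (insert (1 : ℝ) (Set.range fun l => |(ws l).im|))

/-- Resolvent `(D − w)⁻¹` of a deterministic Hermitian matrix. -/
def resD {n : ℕ} (D : Matrix (Fin n) (Fin n) ℂ) (w : ℂ) : Matrix (Fin n) (Fin n) ℂ :=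
  (D - w • 1)⁻¹

/-- `Im A := (A − A^*)/(2i)`. -/
def imPart {m : Type*} [Fintype m] (A : Matrix m m ℂ) : Matrix m m ℂ :=
  (2 * Complex.I)⁻¹ • (A - Aᴴ)

/-- `β₁₂,* := min(|β₁₂,₊|, |β₁₂,₋|)` with
`β₁₂,± := 1 − Re(z₁·conj z₂)u₁u₂ ± √(m₁²m₂² − (Im(z₁·conj z₂))²u₁²u₂²)`
(independent of the choice of complex square root). -/
def betaStar (z₁ z₂ w₁ w₂ : ℂ) : ℝ :=
  min
    ‖(1 : ℂ) - (((z₁ * (starRingEnd ℂ) z₂).re : ℝ) : ℂ) * uSol z₁ w₁ * uSol z₂ w₂ +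
      ((mSol z₁ w₁) ^ 2 * (mSol z₂ w₂) ^ 2 -
          ((((z₁ * (starRingEnd ℂ) z₂).im : ℝ) : ℂ)) ^ 2 * (uSol z₁ w₁) ^ 2 * (uSol z₂ w₂) ^ 2) ^
        ((1 : ℂ) / 2)‖
    ‖(1 : ℂ) - (((z₁ * (starRingEnd ℂ) z₂).re : ℝ) : ℂ) * uSol z₁ w₁ * uSol z₂ w₂ -
      ((mSol z₁ w₁) ^ 2 * (mSol z₂ w₂) ^ 2 -
          ((((z₁ * (starRingEnd ℂ) z₂).im : ℝ) : ℂ)) ^ 2 * (uSol z₁ w₁) ^ 2 * (uSol z₂ w₂) ^ 2) ^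
        ((1 : ℂ) / 2)‖

/-- `min over w₁' ∈ {w₁, conj w₁}, w₂' ∈ {w₂, conj w₂} of min(β₁₂,*(w₁',w₂'), 1)`. -/
def betaStarMin (z₁ z₂ w₁ w₂ : ℂ) : ℝ :=
  min
    (min (min (betaStar z₁ z₂ w₁ w₂) (betaStar z₁ z₂ w₁ ((starRingEnd ℂ) w₂)))
      (min (betaStar z₁ z₂ ((starRingEnd ℂ) w₁) w₂)
        (betaStar z₁ z₂ ((starRingEnd ℂ) w₁) ((starRingEnd ℂ) w₂))))
    1

/-- The `2N×2N` matrix `Z` with blocks `[[0, z·I],[conj z·I, 0]]`. -/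
def Zmat (N : ℕ) (z : ℂ) : Matrix (Fin N ⊕ Fin N) (Fin N ⊕ Fin N) ℂ :=
  Matrix.fromBlocks 0 (z • 1) (((starRingEnd ℂ) z) • 1) 0

/-!
With `E = E₋` we have `E H E = -H` and `E² = 1`, so `E (H - w)⁻¹ E = -(H + w)⁻¹` and
`(G E)² = -(H² - w²)⁻¹`. For odd powers write `G = (H + w)(H² - w²)⁻¹`: the supertrace
`A ↦ tr (A E)` kills `H B` whenever `B` commutes with `H` (cyclicity against `E H = -H E`), and it
kills `(H² - w²)⁻ᵏ` by induction on `k` from `tr E = 0`, since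
`(H² - w²)⁻ᵏ = H² (H² - w²)⁻ᵏ⁻¹ - w² (H² - w²)⁻ᵏ⁻¹`. For even powers expand `(H² - w²)⁻ⁿ` in
partial fractions in `(H - w)⁻¹` and `(H + w)⁻¹`, which is the negative-binomial identity
`xⁿ ∑ₛ C(n-1+s, s) yˢ + yⁿ ∑ₛ C(n-1+s, s) xˢ = 1` for `x + y = 1`, and use
`tr (H + w)⁻ᵏ = (-1)ᵏ tr (H - w)⁻ᵏ`.
-/

open Finset

section NegativeBinomial

variable {R : Type*} [CommRing R] {x y : R}

theorem pow_mul_sum_choose_sub_pow_succ_mul_sum_choose (hxy : x + y = 1) (p q : ℕ) :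
    x ^ (p + 1) * ∑ s ∈ range (q + 1), ((p + s).choose s : R) * y ^ s -
        x ^ (p + 2) * ∑ s ∈ range (q + 1), ((p + 1 + s).choose s : R) * y ^ s =
      ((p + q + 1).choose q : R) * x ^ (p + 1) * y ^ (q + 1) := by
  induction q with
  | zero =>
    simp only [zero_add, sum_range_one, Nat.choose_zero_right, Nat.cast_one, pow_zero, mul_one]
    linear_combination -x ^ (p + 1) * hxy
  | succ q ih =>
    have pascal : ((p + 1 + (q + 1)).choose (q + 1) : R) =
        ((p + q + 1).choose q : R) + ((p + q + 1).choose (q + 1) : R) := by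
      rw [show p + 1 + (q + 1) = p + q + 1 + 1 by ring, Nat.choose_succ_succ', Nat.cast_add]
    rw [sum_range_succ, sum_range_succ (n := q + 1), show p + (q + 1) = p + q + 1 by ring,
      show p + q + 1 + 1 = p + 1 + (q + 1) by ring]
    linear_combination ih - x ^ (p + 1) * y ^ (q + 1) * pascal -
      ((p + 1 + (q + 1)).choose (q + 1) : R) * x ^ (p + 1) * y ^ (q + 1) * hxy

/-- Negative-binomial tails: `p + 1` successes (probability `x`) come before `q + 1` failures
(probability `y`), or the converse happens. -/
theorem pow_mul_sum_choose_add_pow_mul_sum_choose (hxy : x + y = 1) (p q : ℕ) :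
    x ^ (p + 1) * ∑ s ∈ range (q + 1), ((p + s).choose s : R) * y ^ s +
        y ^ (q + 1) * ∑ s ∈ range (p + 1), ((q + s).choose s : R) * x ^ s = 1 := by
  induction p with
  | zero =>
    simp only [zero_add, Nat.choose_self, Nat.choose_zero_right, Nat.cast_one, one_mul, pow_one,
      sum_range_one, pow_zero, mul_one]
    linear_combination mul_neg_geom_sum y (q + 1) + (∑ s ∈ range (q + 1), y ^ s) * hxy
  | succ p ih =>
    have symm : ((q + (p + 1)).choose (p + 1) : R) = ((p + q + 1).choose q : R) := by
      rw [show q + (p + 1) = p + 1 + q by ring, Nat.choose_symm_add,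
        show p + 1 + q = p + q + 1 by ring]
    rw [sum_range_succ (n := p + 1)]
    linear_combination ih - pow_mul_sum_choose_sub_pow_succ_mul_sum_choose hxy p q +
      y ^ (q + 1) * x ^ (p + 1) * symm

theorem mul_pow_succ_eq_sum_choose (hxy : x + y = 1) (u v : R) (m : ℕ) :
    (u * v) ^ (m + 1) = ∑ s ∈ range (m + 1), ((m + s).choose s : R) *
      ((x * u) ^ (m + 1) * (y * v) ^ s * v ^ (m + 1 - s) +
        (y * v) ^ (m + 1) * (x * u) ^ s * u ^ (m + 1 - s)) := by
  rw [← one_mul ((u * v) ^ (m + 1)), ← pow_mul_sum_choose_add_pow_mul_sum_choose hxy m m,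
    mul_sum, mul_sum, add_mul, sum_mul, sum_mul, ← sum_add_distrib]
  refine sum_congr rfl fun s hs => ?_
  obtain ⟨t, rfl⟩ := Nat.exists_eq_add_of_le (Nat.lt_succ_iff.mp (mem_range.mp hs))
  rw [show s + t + 1 - s = t + 1 by omega]
  ring

end NegativeBinomial

open scoped IsMulCommutative in
theorem mul_pow_succ_eq_sum_choose_of_commute {A : Type*} [Ring A] {x u v : A}
    (hxu : Commute x u) (hxv : Commute x v) (huv : Commute u v) (m : ℕ) :
    (u * v) ^ (m + 1) = ∑ s ∈ range (m + 1), ((m + s).choose s : A) *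
      ((x * u) ^ (m + 1) * ((1 - x) * v) ^ s * v ^ (m + 1 - s) +
        ((1 - x) * v) ^ (m + 1) * (x * u) ^ s * u ^ (m + 1 - s)) := by
  have : IsMulCommutative (Subring.closure {x, u, v}) := Subring.isMulCommutative_closure <| by
    simp only [Set.mem_insert_iff, Set.mem_singleton_iff]
    rintro a (rfl | rfl | rfl) b (rfl | rfl | rfl) <;>
      first | rfl | assumption | exact Commute.symm ‹_›
  simpa using congrArg Subtype.val <| mul_pow_succ_eq_sum_choose (add_sub_cancel _ 1)
    (x := (⟨x, Subring.subset_closure (by simp)⟩ : Subring.closure {x, u, v}))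
    ⟨u, Subring.subset_closure (by simp)⟩ ⟨v, Subring.subset_closure (by simp)⟩ m

section Chiral

variable {n K : Type*} [Fintype n] [Field K] {E H : Matrix n n K}

theorem trace_mul_mul_eq_zero_of_anticommute [NeZero (2 : K)] {B : Matrix n n K}
    (hEH : E * H = -(H * E)) (hHB : Commute H B) : trace (H * B * E) = 0 := by
  have h : trace (H * B * E) = -trace (H * B * E) :=
    calc trace (H * B * E) = trace (B * (E * H)) := by
          rw [Matrix.mul_assoc, trace_mul_comm, Matrix.mul_assoc]
      _ = -trace (H * B * E) := by
          rw [hEH, Matrix.mul_neg, trace_neg, ← Matrix.mul_assoc, ← hHB.eq]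
  have h2 : (2 : K) * trace (H * B * E) = 0 := by linear_combination h
  exact (mul_eq_zero.mp h2).resolve_left two_ne_zero

variable [DecidableEq n]

theorem commute_inv_right {A B : Matrix n n K} (h : Commute A B) : Commute A B⁻¹ := by
  by_cases hB : IsUnit B.det
  · calc A * B⁻¹ = B⁻¹ * (B * A) * B⁻¹ := by
          rw [← Matrix.mul_assoc, nonsing_inv_mul _ hB, Matrix.one_mul]
      _ = B⁻¹ * A := by
          rw [← h.eq, Matrix.mul_assoc, Matrix.mul_assoc, mul_nonsing_inv _ hB, Matrix.mul_one]
  · simp [nonsing_inv_apply_not_isUnit _ hB]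

theorem nonsing_inv_neg (A : Matrix n n K) : (-A)⁻¹ = -A⁻¹ := by
  rw [← neg_one_mul, Matrix.mul_inv_rev, inv_eq_left_inv (by simp : (-1 : Matrix n n K) * -1 = 1),
    mul_neg_one]

theorem commute_add_smul_sub_smul (w : K) : Commute (H + w • 1) (H - w • 1) := by
  have h : Commute H (w • 1) := (Commute.one_right H).smul_right w
  exact ((Commute.refl H).sub_right h).add_left (h.symm.sub_right (Commute.refl _))

theorem add_smul_mul_sub_smul (w : K) : (H + w • 1) * (H - w • 1) = H * H - w ^ 2 • 1 := by
  simp only [add_mul, mul_sub, Matrix.mul_smul, Matrix.smul_mul, Matrix.mul_one, Matrix.one_mul,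
    smul_smul, sq]
  abel

theorem inv_sub_smul_mul_inv_add_smul (w : K) :
    (H - w • 1)⁻¹ * (H + w • 1)⁻¹ = (H * H - w ^ 2 • 1)⁻¹ := by
  rw [← Matrix.mul_inv_rev, add_smul_mul_sub_smul]

theorem commute_inv_mul_self_sub_smul (c : K) : Commute H (H * H - c • 1)⁻¹ :=
  commute_inv_right <|
    ((Commute.refl H).mul_right (Commute.refl H)).sub_right ((Commute.one_right H).smul_right c)

theorem conj_sub_smul (hE : E * E = 1) (hEH : E * H = -(H * E)) (w : K) :
    E * (H - w • 1) * E = -(H + w • 1) := by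
  rw [Matrix.mul_sub, Matrix.sub_mul, hEH, Matrix.neg_mul, Matrix.mul_assoc H, hE, Matrix.mul_smul,
    Matrix.smul_mul, Matrix.mul_one, Matrix.mul_one, hE, neg_add]
  abel

theorem conj_inv_sub_smul (hE : E * E = 1) (hEH : E * H = -(H * E)) (w : K) :
    E * (H - w • 1)⁻¹ * E = -(H + w • 1)⁻¹ := by
  rw [← nonsing_inv_neg, ← conj_sub_smul hE hEH, Matrix.mul_inv_rev, Matrix.mul_inv_rev,
    inv_eq_left_inv hE, Matrix.mul_assoc]

theorem isUnit_add_smul (hE : E * E = 1) (hEH : E * H = -(H * E)) {w : K}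
    (hG : IsUnit (H - w • 1)) : IsUnit (H + w • 1) := by
  have hEu : IsUnit E := ⟨⟨E, E, hE, hE⟩, rfl⟩
  have h := ((hEu.mul hG).mul hEu).neg
  rwa [conj_sub_smul hE hEH, neg_neg] at h

theorem trace_inv_add_smul_pow (hE : E * E = 1) (hEH : E * H = -(H * E)) (w : K) (k : ℕ) :
    trace ((H + w • 1)⁻¹ ^ k) = (-1) ^ k * trace ((H - w • 1)⁻¹ ^ k) := by
  have hconj : (E * (H - w • 1)⁻¹ * E) ^ k = E * (H - w • 1)⁻¹ ^ k * E :=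
    Units.conj_pow ⟨E, E, hE, hE⟩ _ k
  rw [← neg_neg (H + w • 1)⁻¹, ← conj_inv_sub_smul hE hEH, ← neg_one_smul K, smul_pow, hconj,
    trace_smul, trace_mul_cycle, hE, Matrix.one_mul, smul_eq_mul]

theorem inv_sub_smul_mul_pow_even (hE : E * E = 1) (hEH : E * H = -(H * E)) (w : K) (k : ℕ) :
    ((H - w • 1)⁻¹ * E) ^ (2 * k) = (-1 : K) ^ k • (H * H - w ^ 2 • 1)⁻¹ ^ k := by
  have hsq : ((H - w • 1)⁻¹ * E) ^ 2 = (-1 : K) • (H * H - w ^ 2 • 1)⁻¹ := by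
    rw [sq, Matrix.mul_assoc, ← Matrix.mul_assoc E, conj_inv_sub_smul hE hEH, Matrix.mul_neg,
      inv_sub_smul_mul_inv_add_smul, neg_one_smul]
  rw [pow_mul, hsq, smul_pow]

theorem trace_inv_mul_self_sub_smul_pow_mul [NeZero (2 : K)] (hEH : E * H = -(H * E))
    (htr : trace E = 0) {c : K} (hc : c ≠ 0) (hP : IsUnit (H * H - c • 1)) (j : ℕ) :
    trace ((H * H - c • 1)⁻¹ ^ j * E) = 0 := by
  set R := (H * H - c • 1)⁻¹
  have hHR : Commute H R := commute_inv_mul_self_sub_smul c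
  induction j with
  | zero => simpa using htr
  | succ j ih =>
    have hpow : R ^ j = H * H * R ^ (j + 1) - c • R ^ (j + 1) :=
      calc R ^ j = (H * H - c • 1) * R ^ (j + 1) := by
            rw [pow_succ', ← Matrix.mul_assoc, mul_nonsing_inv _ ((isUnit_iff_isUnit_det _).mp hP),
              Matrix.one_mul]
        _ = H * H * R ^ (j + 1) - c • R ^ (j + 1) := by
            rw [Matrix.sub_mul, Matrix.smul_mul, Matrix.one_mul]
    have hodd := trace_mul_mul_eq_zero_of_anticommute hEH ((Commute.refl H).mul_right
      (hHR.pow_right (j + 1)))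
    rw [← Matrix.mul_assoc] at hodd
    rw [hpow, Matrix.sub_mul, trace_sub, Matrix.smul_mul, trace_smul, hodd, zero_sub, neg_eq_zero,
      smul_eq_mul] at ih
    exact (mul_eq_zero.mp ih).resolve_left hc

theorem trace_inv_sub_smul_mul_pow_odd [NeZero (2 : K)] (hE : E * E = 1)
    (hEH : E * H = -(H * E)) (htr : trace E = 0) {w : K} (hw : w ≠ 0) (hG : IsUnit (H - w • 1))
    (k : ℕ) : trace (((H - w • 1)⁻¹ * E) ^ (2 * k + 1)) = 0 := by
  set R := (H * H - w ^ 2 • 1)⁻¹ with hR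
  have hP : IsUnit (H * H - w ^ 2 • 1) := by
    rw [← add_smul_mul_sub_smul]; exact (isUnit_add_smul hE hEH hG).mul hG
  have hHR : Commute H R := commute_inv_mul_self_sub_smul _
  have hGR : (H - w • 1)⁻¹ = (H + w • 1) * R := by
    rw [hR, ← inv_sub_smul_mul_inv_add_smul, ← Matrix.mul_assoc,
      (commute_inv_right (commute_add_smul_sub_smul w)).eq, Matrix.mul_assoc,
      mul_nonsing_inv _ ((isUnit_iff_isUnit_det _).mp (isUnit_add_smul hE hEH hG)), Matrix.mul_one]
  have hsplit : R ^ k * ((H - w • 1)⁻¹ * E) = H * R ^ (k + 1) * E + w • (R ^ (k + 1) * E) := by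
    rw [hGR, ← Matrix.mul_assoc, ← Matrix.mul_assoc,
      ← ((hHR.add_left ((Commute.one_left R).smul_left w)).pow_right k).eq,
      Matrix.mul_assoc _ (R ^ k),
      ← pow_succ, add_mul, add_mul, Matrix.smul_mul, Matrix.one_mul, Matrix.smul_mul]
  rw [pow_succ, inv_sub_smul_mul_pow_even hE hEH, Matrix.smul_mul, trace_smul, hsplit,
    trace_add, trace_smul, trace_mul_mul_eq_zero_of_anticommute hEH (hHR.pow_right _),
    trace_inv_mul_self_sub_smul_pow_mul hEH htr (pow_ne_zero 2 hw) hP, smul_zero, add_zero,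
    smul_zero]

theorem inv_mul_self_sub_smul_pow_succ [NeZero (2 : K)] {w : K} (hw : w ≠ 0)
    (hG : IsUnit (H - w • 1)) (hG' : IsUnit (H + w • 1)) (m : ℕ) :
    (H * H - w ^ 2 • 1)⁻¹ ^ (m + 1) = ∑ s ∈ range (m + 1), ((m + s).choose s : K) •
      (2 * w)⁻¹ ^ (m + 1 + s) • ((-1 : K) ^ s • (H - w • 1)⁻¹ ^ (m + 1 - s) +
        (-1 : K) ^ (m + 1) • (H + w • 1)⁻¹ ^ (m + 1 - s)) := by
  set c := (2 * w)⁻¹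
  have hc2w : c * (2 * w) = 1 := inv_mul_cancel₀ (mul_ne_zero two_ne_zero hw)
  -- `x = (w - H)/(2w)` and `1 - x = (H + w)/(2w)` invert the two resolvents up to scalars.
  set x := (-c) • (H - w • 1)
  have hxG : x * (H - w • 1)⁻¹ = (-c) • 1 := by
    rw [Matrix.smul_mul, mul_nonsing_inv _ ((isUnit_iff_isUnit_det _).mp hG)]
  have hyG' : (1 - x) * (H + w • 1)⁻¹ = c • 1 := by
    have h1x : 1 - x = c • (H + w • 1) := by
      linear_combination (norm := module) -(hc2w • (1 : Matrix n n K))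
    rw [h1x, Matrix.smul_mul, mul_nonsing_inv _ ((isUnit_iff_isUnit_det _).mp hG')]
  have hGG' : Commute (H - w • 1)⁻¹ (H + w • 1)⁻¹ :=
    (commute_inv_right (commute_inv_right (commute_add_smul_sub_smul w).symm).symm).symm
  rw [← inv_sub_smul_mul_inv_add_smul, mul_pow_succ_eq_sum_choose_of_commute
    ((commute_inv_right (Commute.refl _)).smul_left (-c))
    ((commute_inv_right (commute_add_smul_sub_smul w).symm).smul_left (-c)) hGG', hxG, hyG']
  refine sum_congr rfl fun s _ => ?_
  simp only [smul_pow, one_pow, Matrix.smul_mul, Matrix.one_mul, ← nsmul_eq_mul,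
    ← Nat.cast_smul_eq_nsmul K]
  module

theorem trace_inv_sub_smul_mul_pow_even [NeZero (2 : K)] (hE : E * E = 1)
    (hEH : E * H = -(H * E)) {w : K} (hw : w ≠ 0) (hG : IsUnit (H - w • 1)) {n : ℕ} (hn : 1 ≤ n) :
    trace (((H - w • 1)⁻¹ * E) ^ (2 * n)) = 2 * ∑ s ∈ range n, (-1 : K) ^ (s + 1) *
      ((2 * n - 2 - s).choose (n - 1) : K) * trace ((H - w • 1)⁻¹ ^ (s + 1)) /
        (2 * w) ^ (2 * n - s - 1) := by
  obtain ⟨m, rfl⟩ := Nat.exists_eq_add_of_le' hn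
  rw [inv_sub_smul_mul_pow_even hE hEH, trace_smul,
    inv_mul_self_sub_smul_pow_succ hw hG (isUnit_add_smul hE hEH hG), trace_sum, smul_eq_mul,
    mul_sum, mul_sum, ← sum_range_reflect]
  refine sum_congr rfl fun s hs => ?_
  obtain ⟨t, rfl⟩ := Nat.exists_eq_add_of_le (Nat.lt_succ_iff.mp (mem_range.mp hs))
  rw [show s + t + 1 - 1 - s = t by omega, show s + t + 1 - t = s + 1 by omega,
    show 2 * (s + t + 1) - 2 - s = s + t + t by omega, show s + t + 1 - 1 = s + t by omega,
    show 2 * (s + t + 1) - s - 1 = s + t + 1 + t by omega, Nat.choose_symm_add,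
    trace_smul, trace_smul, trace_add, trace_smul, trace_smul, trace_inv_add_smul_pow hE hEH]
  have hsign : (-1 : K) ^ (s + t + 1) * (-1) ^ t = (-1) ^ (s + 1) := by
    rw [← pow_add, show s + t + 1 + t = s + 1 + 2 * t by ring, pow_add, pow_mul]
    norm_num
  have hsq : (-1 : K) ^ (s + t + 1) * (-1) ^ (s + t + 1) = 1 := by
    rw [← mul_pow]
    norm_num
  rw [div_eq_mul_inv, ← inv_pow]
  simp only [smul_eq_mul]
  linear_combination ((s + t + t).choose t * (2 * w)⁻¹ ^ (s + t + 1 + t) *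
    trace ((H - w • 1)⁻¹ ^ (s + 1)) : K) * (hsign + (-1) ^ (s + 1) * hsq)

end Chiral

section Hermitization

theorem isUnit_sub_smul_of_isHermitian {n : Type*} [Fintype n] [DecidableEq n]
    {H : Matrix n n ℂ} (hH : H.IsHermitian) {w : ℂ} (hw : w.im ≠ 0) : IsUnit (H - w • 1) := by
  have hw' : w ∉ spectrum ℂ H := by
    rw [hH.spectrum_eq_image_range]
    rintro ⟨r, -, rfl⟩
    exact hw (Complex.ofReal_im r)
  rw [spectrum.notMem_iff, Algebra.algebraMap_eq_smul_one] at hw'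
  simpa using hw'.neg

variable {N : ℕ}

theorem herm_isHermitian (X : Matrix (Fin N) (Fin N) ℂ) (z : ℂ) : (herm X z).IsHermitian :=
  IsHermitian.fromBlocks isHermitian_zero rfl isHermitian_zero

theorem Em_mul_self : Em N * Em N = 1 := by
  simp [Em, fromBlocks_multiply, fromBlocks_one]

theorem Em_mul_herm (X : Matrix (Fin N) (Fin N) ℂ) (z : ℂ) :
    Em N * herm X z = -(herm X z * Em N) := by
  simp [Em, herm, fromBlocks_multiply, fromBlocks_neg]

theorem trace_Em : trace (Em N) = 0 := by
  simp [Em, Matrix.trace, Fintype.sum_sum_type]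

end Hermitization

theorem stmt16_general {N : ℕ} (X : Matrix (Fin N) (Fin N) ℂ) (z w : ℂ)
    (hw : w.im ≠ 0) (n : ℕ) (hn : 1 ≤ n) :
    ntr ((resolv X z w * Em N) ^ (2 * n - 1)) = 0 ∧
      ntr ((resolv X z w * Em N) ^ (2 * n)) =
        2 * ∑ s ∈ Finset.range n,
          (-1 : ℂ) ^ (s + 1) * (Nat.choose (2 * n - 2 - s) (n - 1) : ℂ) *
            ntr ((resolv X z w) ^ (s + 1)) / (2 * w) ^ (2 * n - s - 1) := by
  have hG := isUnit_sub_smul_of_isHermitian (herm_isHermitian X z) hw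
  have hw0 : w ≠ 0 := by
    rintro rfl
    exact hw Complex.zero_im
  refine ⟨?_, ?_⟩
  · obtain ⟨k, rfl⟩ := Nat.exists_eq_add_of_le' hn
    rw [ntr, resolv, show 2 * (k + 1) - 1 = 2 * k + 1 by omega,
      trace_inv_sub_smul_mul_pow_odd Em_mul_self (Em_mul_herm X z) trace_Em hw0 hG, mul_zero]
  · simp only [ntr, resolv]
    rw [trace_inv_sub_smul_mul_pow_even Em_mul_self (Em_mul_herm X z) hw0 hG hn, mul_left_comm,
      mul_sum]
    exact congrArg _ (sum_congr rfl fun s _ => by ring)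

/-- trace identities for chiral resolvents (Lemma 7.5). -/
theorem stmt16 {N : ℕ} (hN : 1 ≤ N) (X : Matrix (Fin N) (Fin N) ℂ) (z w : ℂ)
    (hw : w.im ≠ 0) (n : ℕ) (hn : 1 ≤ n) :
    ntr ((resolv X z w * Em N) ^ (2 * n - 1)) = 0 ∧
      ntr ((resolv X z w * Em N) ^ (2 * n)) =
        2 * ∑ s ∈ Finset.range n,
          (-1 : ℂ) ^ (s + 1) * (Nat.choose (2 * n - 2 - s) (n - 1) : ℂ) *
            ntr ((resolv X z w) ^ (s + 1)) / (2 * w) ^ (2 * n - s - 1) :=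
  stmt16_general X z w hw n hn

end RMT

end
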